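/- arXiv:1304.1313 — 2 statements merged into one kernel-verified Lean document; each statement's English description precedes it below -/
import Mathlib

section
/- Let X be a Banach space, V a closed subspace, Y ⊆ X* a closed subspace such that R : Y → V*, R(x*) = x*↾_V, is a surjective isometry, and let P(x*) = R^{−1}(x*↾_V). Then the weak* closure of V (viewed canonically in X**) equals P*(X**), the range of the adjoint of P. -/
/-!
Because restriction to `V` is injective on `Y`, the map `P` is an idempotent whose kernel is the
annihilator `V^⊥`. Hence `P*(X**) = {G | G ∘ P = G}` is the annihilator of `ker P = V^⊥` in `X**`.
The dual of `(X**, w*)` is `X*`, so by Hahn–Banach the weak* closure of `V` is the annihilator of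
`V^⊥` as well.
-/

open Set NormedSpace

theorem Submodule.apply_eq_zero_of_forall_apply_lt {E : Type*} [AddCommGroup E] [Module ℝ E]
    (S : Submodule ℝ E) (f : E →ₗ[ℝ] ℝ) {u : ℝ} (h : ∀ s ∈ S, f s < u) {s : E} (hs : s ∈ S) :
    f s = 0 := by
  by_contra hfs
  have := h ((u / f s) • s) (S.smul_mem _ hs)
  rw [map_smul, smul_eq_mul, div_mul_cancel₀ u hfs] at this
  exact lt_irrefl u this

theorem Submodule.exists_dual_eq_zero_ne_zero_of_notMem_closure {E : Type*} [AddCommGroup E]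
    [Module ℝ E] [TopologicalSpace E] [IsTopologicalAddGroup E] [ContinuousSMul ℝ E]
    [LocallyConvexSpace ℝ E] (S : Submodule ℝ E) {x : E} (hx : x ∉ closure (S : Set E)) :
    ∃ f : StrongDual ℝ E, (∀ s ∈ S, f s = 0) ∧ f x ≠ 0 := by
  obtain ⟨f, u, hfS, hfx⟩ :=
    geometric_hahn_banach_closed_point S.convex.closure isClosed_closure hx
  have hS : ∀ s ∈ S, f s < u := fun s hs => hfS s (subset_closure hs)
  refine ⟨f, fun s hs => S.apply_eq_zero_of_forall_apply_lt f hS hs, fun hfx0 => ?_⟩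
  have hu := hS 0 S.zero_mem
  rw [map_zero] at hu
  linarith

theorem WeakBilin.mem_closure_submodule_iff {E F : Type*} [AddCommGroup E] [Module ℝ E]
    [AddCommGroup F] [Module ℝ F] (B : E →ₗ[ℝ] F →ₗ[ℝ] ℝ) (S : Submodule ℝ (WeakBilin B))
    (x : WeakBilin B) :
    x ∈ closure (S : Set (WeakBilin B)) ↔ ∀ y : F, (∀ s ∈ S, B s y = 0) → B x y = 0 := by
  constructor
  · intro hx y hy
    exact closure_minimal hy (isClosed_eq (WeakBilin.eval_continuous B y) continuous_const) hx
  · intro h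
    by_contra hx
    obtain ⟨f, hfS, hfx⟩ := S.exists_dual_eq_zero_ne_zero_of_notMem_closure hx
    obtain ⟨y, rfl⟩ := LinearMap.dualEmbedding_surjective B f
    exact hfx (h y hfS)

theorem WeakDual.mem_closure_submodule_iff {E : Type*} [AddCommGroup E] [TopologicalSpace E]
    [Module ℝ E]
    (S : Submodule ℝ (WeakDual ℝ E)) (x : WeakDual ℝ E) :
    x ∈ closure (S : Set (WeakDual ℝ E)) ↔ ∀ e : E, (∀ s ∈ S, s e = 0) → x e = 0 :=
  WeakBilin.mem_closure_submodule_iff (topDualPairing ℝ E) S x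

theorem Set.injOn_of_norm_map_eq {E F 𝓕 : Type*} [NormedAddGroup E]
    [SeminormedAddGroup F] [FunLike 𝓕 E F] [AddMonoidHomClass 𝓕 E F] (f : 𝓕)
    (Y : AddSubgroup E) (hf : ∀ y ∈ Y, ‖f y‖ = ‖y‖) : InjOn f Y := by
  intro a ha b hb hab
  rw [← sub_eq_zero, ← norm_eq_zero, ← hf _ (Y.sub_mem ha hb), map_sub, hab, sub_self, norm_zero]

section Lift

variable {M N : Type*} {Y : Set M} {r : M → N} {P : M → M}

theorem apply_apply_eq_of_injOn (hY : InjOn r Y) (hP : ∀ x, P x ∈ Y ∧ r (P x) = r x) (x : M) :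
    P (P x) = P x :=
  hY (hP _).1 (hP x).1 (hP _).2

theorem apply_eq_zero_iff_of_injOn [Zero M] [Zero N] (hY : InjOn r Y) (h0 : 0 ∈ Y) (hr : r 0 = 0)
    (hP : ∀ x, P x ∈ Y ∧ r (P x) = r x) (x : M) : P x = 0 ↔ r x = 0 := by
  constructor
  · intro hx
    rw [← (hP x).2, hx, hr]
  · intro hx
    exact hY (hP x).1 h0 ((hP x).2.trans (hx.trans hr.symm))

end Lift

theorem ContinuousLinearMap.range_comp_eq_of_isIdempotentElem {R M N : Type*} [Semiring R]
    [TopologicalSpace M] [AddCommGroup M] [Module R M] [TopologicalSpace N] [AddCommGroup N]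
    [Module R N] {P : M →L[R] M} (hP : IsIdempotentElem P) :
    range (fun F : M →L[R] N => F.comp P) = {G | ∀ e, P e = 0 → G e = 0} := by
  ext G
  constructor
  · rintro ⟨F, rfl⟩ e he
    rw [comp_apply, he, map_zero]
  · intro hG
    refine ⟨G, ext fun e => ?_⟩
    have hPe : P (e - P e) = 0 := by
      rw [map_sub, show P (P e) = P e from DFunLike.congr_fun hP.eq e, sub_self]
    rw [comp_apply, eq_comm, ← sub_eq_zero, ← map_sub]
    exact hG _ hPe

theorem stmt_12_general (X : Type*) [NormedAddCommGroup X] [NormedSpace ℝ X]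
    (V : Submodule ℝ X)
    (Y : Submodule ℝ (StrongDual ℝ X))
    (hiso : ∀ y ∈ Y, ‖y.comp V.subtypeL‖ = ‖y‖)
    (P : StrongDual ℝ X →L[ℝ] StrongDual ℝ X)
    (hP : ∀ x : StrongDual ℝ X, P x ∈ Y ∧ (P x).comp V.subtypeL = x.comp V.subtypeL) :
    closure ((fun v : X => StrongDual.toWeakDual (inclusionInDoubleDual ℝ X v)) '' (V : Set X)) =
      StrongDual.toWeakDual '' (Set.range fun x : StrongDual ℝ (StrongDual ℝ X) => x.comp P) := by
  let r : StrongDual ℝ X →L[ℝ] StrongDual ℝ V := ContinuousLinearMap.precomp ℝ V.subtypeL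
  have hr : InjOn r Y := injOn_of_norm_map_eq r Y.toAddSubgroup hiso
  have hidem : IsIdempotentElem P := ContinuousLinearMap.ext (apply_apply_eq_of_injOn hr hP)
  have hker (e : StrongDual ℝ X) : P e = 0 ↔ ∀ v ∈ V, e v = 0 := by
    rw [apply_eq_zero_iff_of_injOn hr Y.zero_mem (map_zero r) hP, ContinuousLinearMap.ext_iff,
      Subtype.forall]
    rfl
  let J := StrongDual.toWeakDual.toLinearMap ∘ₗ (inclusionInDoubleDual ℝ X).toLinearMap
  have himage : (fun v : X => StrongDual.toWeakDual (inclusionInDoubleDual ℝ X v)) '' (V : Set X)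
      = (V.map J : Set (WeakDual ℝ (StrongDual ℝ X))) := rfl
  ext G
  rw [himage, WeakDual.mem_closure_submodule_iff,
    ContinuousLinearMap.range_comp_eq_of_isIdempotentElem hidem,
    LinearEquiv.image_eq_preimage_symm]
  simp only [Submodule.mem_map, forall_exists_index, and_imp, forall_apply_eq_imp_iff₂, hker]
  rfl

/-- with `R : Y → V*` a surjective isometry and `P(x*) = R⁻¹(x*↾_V)`, the
weak* closure of `V` in `X**` equals `P*(X**)`, the range of the adjoint of `P`. -/
theorem stmt_12 (X : Type*) [NormedAddCommGroup X] [NormedSpace ℝ X] [CompleteSpace X]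
    (V : Submodule ℝ X) (hVc : IsClosed (V : Set X))
    (Y : Submodule ℝ (StrongDual ℝ X)) (hYc : IsClosed (Y : Set (StrongDual ℝ X)))
    (hiso : ∀ y ∈ Y, ‖y.comp V.subtypeL‖ = ‖y‖)
    (hsurj : ∀ w : StrongDual ℝ V, ∃ y ∈ Y, y.comp V.subtypeL = w)
    (P : StrongDual ℝ X →L[ℝ] StrongDual ℝ X)
    (hP : ∀ x : StrongDual ℝ X, P x ∈ Y ∧ (P x).comp V.subtypeL = x.comp V.subtypeL) :
    closure ((fun v : X => StrongDual.toWeakDual (inclusionInDoubleDual ℝ X v)) '' (V : Set X)) =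
      StrongDual.toWeakDual '' (Set.range fun x : StrongDual ℝ (StrongDual ℝ X) => x.comp P) :=
  stmt_12_general X V Y hiso P hP
end

section
/- Let X be a Banach space, γ a limit ordinal, and (V_α)_{α<γ} an increasing family of closed subspaces of X with closed subspaces Y_α ⊆ X* such that each restriction map R_α : Y_α → V_α*, x* ↦ x*↾_{V_α}, is an isometry. Let V be the closed linear span of ∪_α V_α and Y the closed linear span of ∪_α Y_α. Then the restriction map R : Y → V*, x* ↦ x*↾_V, is an isometry. -/
/-!
A functional `f` restricted to a subspace `U ⊆ W` has norm at most that of its restriction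
to `W`, which in turn is at most `‖f‖`; so a functional normed by some `V_α` is normed by `V`.
Since the `Y_α` are directed, every element of their span already lies in a single `Y_α`, and
norm-preservation passes to the closure because both sides depend continuously on `f`.
-/

namespace ContinuousLinearMap

variable {𝕜 E F : Type*} [NontriviallyNormedField 𝕜] [SeminormedAddCommGroup E]
  [NormedSpace 𝕜 E] [SeminormedAddCommGroup F] [NormedSpace 𝕜 F]

theorem norm_comp_subtypeL_le (f : E →L[𝕜] F) (W : Submodule 𝕜 E) :
    ‖f.comp W.subtypeL‖ ≤ ‖f‖ :=
  (opNorm_comp_le _ _).trans (mul_le_of_le_one_right (norm_nonneg f) W.norm_subtypeL_le)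

theorem norm_comp_subtypeL_mono (f : E →L[𝕜] F) {U W : Submodule 𝕜 E} (hUW : U ≤ W) :
    ‖f.comp U.subtypeL‖ ≤ ‖f.comp W.subtypeL‖ :=
  opNorm_le_bound _ (norm_nonneg _) fun x => by
    simpa using (f.comp W.subtypeL).le_opNorm ⟨x, hUW x.2⟩

theorem isClosed_setOf_norm_comp_subtypeL_eq (W : Submodule 𝕜 E) :
    IsClosed {f : E →L[𝕜] F | ‖f.comp W.subtypeL‖ = ‖f‖} :=
  isClosed_eq ((compL 𝕜 W E F).flip W.subtypeL).continuous.norm continuous_norm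

theorem norm_comp_subtypeL_eq_of_le {U W : Submodule 𝕜 E} (hUW : U ≤ W) {f : E →L[𝕜] F}
    (hf : ‖f.comp U.subtypeL‖ = ‖f‖) : ‖f.comp W.subtypeL‖ = ‖f‖ :=
  (f.norm_comp_subtypeL_le W).antisymm (hf ▸ f.norm_comp_subtypeL_mono hUW)

theorem norm_comp_subtypeL_eq_of_mem_closure_iSup {ι : Type*} {U : ι → Submodule 𝕜 E}
    {Z : ι → Submodule 𝕜 (E →L[𝕜] F)} (hZ : Directed (· ≤ ·) Z)
    (hUZ : ∀ i, ∀ f ∈ Z i, ‖f.comp (U i).subtypeL‖ = ‖f‖) {W : Submodule 𝕜 E}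
    (hUW : ∀ i, U i ≤ W) {f : E →L[𝕜] F} (hf : f ∈ (⨆ i, Z i).topologicalClosure) :
    ‖f.comp W.subtypeL‖ = ‖f‖ := by
  suffices hsup : ((⨆ i, Z i : Submodule 𝕜 (E →L[𝕜] F)) : Set (E →L[𝕜] F)) ⊆
      {f | ‖f.comp W.subtypeL‖ = ‖f‖} from
    closure_minimal hsup (isClosed_setOf_norm_comp_subtypeL_eq W) hf
  intro g hg
  rcases isEmpty_or_nonempty ι with hι | hι
  · rw [iSup_of_empty, SetLike.mem_coe, Submodule.mem_bot] at hg
    simp [hg]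
  · obtain ⟨i, hgi⟩ := (Submodule.mem_iSup_of_directed Z hZ).1 hg
    exact norm_comp_subtypeL_eq_of_le (hUW i) (hUZ i g hgi)

end ContinuousLinearMap

theorem stmt_16_general (X : Type*) [NormedAddCommGroup X] [NormedSpace ℝ X]
    (γ : Ordinal)
    (V : Ordinal → Submodule ℝ X) (Y : Ordinal → Submodule ℝ (StrongDual ℝ X))
    (hYmono : ∀ α β : Ordinal, α ≤ β → β < γ → Y α ≤ Y β)
    (hiso : ∀ α < γ, ∀ y ∈ Y α, ‖y.comp (V α).subtypeL‖ = ‖y‖) :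
    ∀ y ∈ (⨆ α ∈ Set.Iio γ, Y α).topologicalClosure,
      ‖y.comp (⨆ α ∈ Set.Iio γ, V α).topologicalClosure.subtypeL‖ = ‖y‖ := by
  intro y hy
  have hdir : Directed (· ≤ ·) fun α : Set.Iio γ => Y α := fun a b =>
    (le_total (a : Ordinal) b).elim (fun h => ⟨b, hYmono a b h b.2, le_rfl⟩)
      (fun h => ⟨a, le_rfl, hYmono b a h a.2⟩)
  rw [iSup_subtype'] at hy
  refine ContinuousLinearMap.norm_comp_subtypeL_eq_of_mem_closure_iSup hdir
    (fun α => hiso α α.2) (fun α => ?_) hy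
  exact (le_iSup₂ (f := fun α (_ : α ∈ Set.Iio γ) => V α) α α.2).trans
    (Submodule.le_topologicalClosure _)

/-- for an increasing family `(V_α)_{α<γ}` (`γ` a limit ordinal) of closed
subspaces with closed `Y_α ⊆ X*` such that each restriction `R_α : Y_α → V_α*` is an
isometry, the restriction map from `Y = cl span(∪ Y_α)` to `V* = (cl span(∪ V_α))*` is an
isometry. -/
theorem stmt_16 (X : Type*) [NormedAddCommGroup X] [NormedSpace ℝ X] [CompleteSpace X]
    (γ : Ordinal) (hγ : Order.IsSuccLimit γ)
    (V : Ordinal → Submodule ℝ X) (Y : Ordinal → Submodule ℝ (StrongDual ℝ X))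
    (hVc : ∀ α < γ, IsClosed (V α : Set X))
    (hYc : ∀ α < γ, IsClosed (Y α : Set (StrongDual ℝ X)))
    (hVmono : ∀ α β : Ordinal, α ≤ β → β < γ → V α ≤ V β)
    (hYmono : ∀ α β : Ordinal, α ≤ β → β < γ → Y α ≤ Y β)
    (hiso : ∀ α < γ, ∀ y ∈ Y α, ‖y.comp (V α).subtypeL‖ = ‖y‖) :
    ∀ y ∈ (⨆ α ∈ Set.Iio γ, Y α).topologicalClosure,
      ‖y.comp (⨆ α ∈ Set.Iio γ, V α).topologicalClosure.subtypeL‖ = ‖y‖ :=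
  stmt_16_general X γ V Y hYmono hiso
end
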